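/- Let (v_j)_{j∈J} be a countable family of nonnegative reals with Σ_j v_j < ∞, and for each j∈J let (Y^{(j)}_η)_{η∈(0,1]} be nonnegative random variables with E[Y^{(j)}_η] = 1 for all η, such that Y^{(j)}_η → Y^{(j)}_0 almost surely as η ↓ 0 with E[Y^{(j)}_0] = 1. Suppose moreover that S_η := Σ_j v_j Y^{(j)}_η converges almost surely as η ↓ 0 to some limit S_0. Then S_0 = Σ_j v_j Y^{(j)}_0 almost surely. -/

import Mathlib

/-!
Work in `ℝ≥0∞` and along a sequence `ηₙ ↓ 0`. Termwise convergence and Fatou's lemma for series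
give `∑ⱼ vⱼ Y⁽ʲ⁾₀ ≤ S₀` almost surely, while Fatou's lemma on `Ω` gives
`E[S₀] ≤ liminf E[Sₙ] = ∑ⱼ vⱼ = E[∑ⱼ vⱼ Y⁽ʲ⁾₀]`. A pointwise inequality between functions with
the same finite integral is an almost sure equality.
-/

open MeasureTheory ProbabilityTheory Filter Topology
open scoped ENNReal

theorem ENNReal.tsum_le_liminf_tsum_of_tendsto {ι J : Type*} {l : Filter ι} [l.NeBot]
    {a : ι → J → ℝ≥0∞} {b : J → ℝ≥0∞} (h : ∀ j, Tendsto (fun i => a i j) l (𝓝 (b j))) :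
    ∑' j, b j ≤ liminf (fun i => ∑' j, a i j) l := by
  rw [ENNReal.tsum_eq_iSup_sum]
  refine iSup_le fun F => ?_
  rw [← (tendsto_finsetSum F fun j _ => h j).liminf_eq]
  exact liminf_le_liminf (Eventually.of_forall fun i => ENNReal.sum_le_tsum F)

theorem ENNReal.toReal_tsum_ofReal {J : Type*} {a : J → ℝ} (ha : ∀ j, 0 ≤ a j) :
    (∑' j, ENNReal.ofReal (a j)).toReal = ∑' j, a j := by
  rw [ENNReal.tsum_toReal_eq fun _ => ENNReal.ofReal_ne_top]
  simp only [ENNReal.toReal_ofReal (ha _)]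

section

variable {Ω : Type*} [MeasurableSpace Ω] {μ : Measure Ω}

theorem ae_eq_of_ae_le_of_tendsto_of_lintegral_le {f : ℕ → Ω → ℝ≥0∞} {g h : Ω → ℝ≥0∞}
    (hf : ∀ n, AEMeasurable (f n) μ) (hfg : ∀ᵐ ω ∂μ, Tendsto (fun n => f n ω) atTop (𝓝 (g ω)))
    (hhg : h ≤ᵐ[μ] g) (hfh : ∀ n, ∫⁻ ω, f n ω ∂μ ≤ ∫⁻ ω, h ω ∂μ) (hh : ∫⁻ ω, h ω ∂μ ≠ ∞) :
    h =ᵐ[μ] g := by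
  refine ae_eq_of_ae_le_of_lintegral_le hhg hh (aemeasurable_of_tendsto_metrizable_ae' hf hfg) ?_
  calc ∫⁻ ω, g ω ∂μ = ∫⁻ ω, liminf (fun n => f n ω) atTop ∂μ :=
        lintegral_congr_ae (hfg.mono fun ω hω => hω.liminf_eq.symm)
    _ ≤ liminf (fun n => ∫⁻ ω, f n ω ∂μ) atTop := lintegral_liminf_le' hf
    _ ≤ ∫⁻ ω, h ω ∂μ := liminf_le_of_frequently_le' (Frequently.of_forall hfh)

theorem aemeasurable_of_integral_eq_one {f : Ω → ℝ} (h1 : ∫ ω, f ω ∂μ = 1) :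
    AEMeasurable f μ :=
  (Integrable.of_integral_ne_zero (h1 ▸ one_ne_zero)).aemeasurable

theorem lintegral_ofReal_of_integral_eq_one {f : Ω → ℝ} (hf : 0 ≤ᵐ[μ] f)
    (h1 : ∫ ω, f ω ∂μ = 1) : ∫⁻ ω, ENNReal.ofReal (f ω) ∂μ = 1 := by
  rw [← ofReal_integral_eq_lintegral_ofReal (Integrable.of_integral_ne_zero (h1 ▸ one_ne_zero)) hf,
    h1, ENNReal.ofReal_one]

theorem lintegral_tsum_ofReal_mul_of_integral_eq_one {J : Type*} [Countable J] {v : J → ℝ}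
    (hv : ∀ j, 0 ≤ v j) {Z : J → Ω → ℝ} (hZ : ∀ j, 0 ≤ᵐ[μ] Z j) (hZ1 : ∀ j, ∫ ω, Z j ω ∂μ = 1) :
    ∫⁻ ω, ∑' j, ENNReal.ofReal (v j * Z j ω) ∂μ = ∑' j, ENNReal.ofReal (v j) := by
  have hZm j := (aemeasurable_of_integral_eq_one (hZ1 j)).ennreal_ofReal
  simp_rw [ENNReal.ofReal_mul (hv _)]
  rw [lintegral_tsum fun j => (hZm j).const_mul _]
  congr 1 with j
  rw [lintegral_const_mul'' _ (hZm j), lintegral_ofReal_of_integral_eq_one (hZ j) (hZ1 j), mul_one]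

theorem ae_eq_tsum_mul_of_tendsto_of_integral_eq_one {J : Type*} [Countable J]
    {v : J → ℝ} (hv : ∀ j, 0 ≤ v j) (hsum : Summable v) {Y : J → ℕ → Ω → ℝ} {Y0 : J → Ω → ℝ}
    (hnn : ∀ j n ω, 0 ≤ Y j n ω) (hnn0 : ∀ j ω, 0 ≤ Y0 j ω)
    (hmean : ∀ j n, ∫ ω, Y j n ω ∂μ = 1) (hmean0 : ∀ j, ∫ ω, Y0 j ω ∂μ = 1)
    (hconv : ∀ j, ∀ᵐ ω ∂μ, Tendsto (fun n => Y j n ω) atTop (𝓝 (Y0 j ω)))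
    {S0 : Ω → ℝ} (hS : ∀ᵐ ω ∂μ, Tendsto (fun n => ∑' j, v j * Y j n ω) atTop (𝓝 (S0 ω))) :
    S0 =ᵐ[μ] fun ω => ∑' j, v j * Y0 j ω := by
  set L : ℕ → Ω → ℝ≥0∞ := fun n ω => ∑' j, ENNReal.ofReal (v j * Y j n ω)
  set W : Ω → ℝ≥0∞ := fun ω => ∑' j, ENNReal.ofReal (v j * Y0 j ω)
  have hL n : ∫⁻ ω, L n ω ∂μ = ∑' j, ENNReal.ofReal (v j) :=
    lintegral_tsum_ofReal_mul_of_integral_eq_one hv (fun j => ae_of_all _ (hnn j n))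
      (fun j => hmean j n)
  have hW : ∫⁻ ω, W ω ∂μ = ∑' j, ENNReal.ofReal (v j) :=
    lintegral_tsum_ofReal_mul_of_integral_eq_one hv (fun j => ae_of_all _ (hnn0 j)) hmean0
  have hfin : ∑' j, ENNReal.ofReal (v j) ≠ ∞ := by
    rw [← ENNReal.ofReal_tsum_of_nonneg hv hsum]
    exact ENNReal.ofReal_ne_top
  have hLm n : AEMeasurable (L n) μ := AEMeasurable.tsum fun j =>
    ((aemeasurable_of_integral_eq_one (hmean j n)).const_mul (v j)).ennreal_ofReal
  have hLfin : ∀ᵐ ω ∂μ, ∀ n, L n ω ≠ ∞ :=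
    ae_all_iff.2 fun n => (ae_lt_top' (hLm n) ((hL n).trans_ne hfin)).mono fun _ => ne_of_lt
  -- the real `tsum` is `0` on non-summable series, so it matches `L n ω` only where the latter is finite
  have hLS : ∀ᵐ ω ∂μ, Tendsto (fun n => L n ω) atTop (𝓝 (ENNReal.ofReal (S0 ω))) := by
    filter_upwards [hLfin, hS] with ω hLω hSω
    have hLeq n : L n ω = ENNReal.ofReal (∑' j, v j * Y j n ω) := by
      rw [← ENNReal.toReal_tsum_ofReal fun j => mul_nonneg (hv j) (hnn j n ω),
        ENNReal.ofReal_toReal (hLω n)]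
    simpa only [hLeq] using ENNReal.tendsto_ofReal hSω
  have hWS : W ≤ᵐ[μ] fun ω => ENNReal.ofReal (S0 ω) := by
    filter_upwards [hLS, ae_all_iff.2 hconv] with ω hLω hYω
    rw [← hLω.liminf_eq]
    exact ENNReal.tsum_le_liminf_tsum_of_tendsto fun j =>
      ENNReal.tendsto_ofReal ((hYω j).const_mul (v j))
  have hWeq : W =ᵐ[μ] fun ω => ENNReal.ofReal (S0 ω) :=
    ae_eq_of_ae_le_of_tendsto_of_lintegral_le hLm hLS hWS (fun n => (hL n).trans hW.symm |>.le)
      (hW ▸ hfin)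
  filter_upwards [hWeq, hS] with ω hWω hSω
  have hS0 : 0 ≤ S0 ω :=
    ge_of_tendsto' hSω fun n => tsum_nonneg fun j => mul_nonneg (hv j) (hnn j n ω)
  rw [← ENNReal.toReal_tsum_ofReal fun j => mul_nonneg (hv j) (hnn0 j ω)]
  change S0 ω = (W ω).toReal
  rw [hWω, ENNReal.toReal_ofReal hS0]

end

theorem stmt_3_general {Ω : Type*} [MeasureSpace Ω]
    {J : Type*} [Countable J]
    (v : J → ℝ) (hv : ∀ j, 0 ≤ v j) (hsum : Summable v)
    (Y : J → ℝ → Ω → ℝ) (Y0 : J → Ω → ℝ)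
    (hnn : ∀ j, ∀ η ∈ Set.Ioc (0:ℝ) 1, ∀ ω, 0 ≤ Y j η ω)
    (hnn0 : ∀ j ω, 0 ≤ Y0 j ω)
    (hmean : ∀ j, ∀ η ∈ Set.Ioc (0:ℝ) 1, ∫ ω, Y j η ω ∂ℙ = 1)
    (hmean0 : ∀ j, ∫ ω, Y0 j ω ∂ℙ = 1)
    (hconv : ∀ j, ∀ᵐ ω ∂ℙ, Tendsto (fun η => Y j η ω) (𝓝[Set.Ioc (0:ℝ) 1] 0) (𝓝 (Y0 j ω)))
    (S0 : Ω → ℝ)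
    (hS : ∀ᵐ ω ∂ℙ, Tendsto (fun η => ∑' j, v j * Y j η ω) (𝓝[Set.Ioc (0:ℝ) 1] 0) (𝓝 (S0 ω))) :
    S0 =ᵐ[ℙ] fun ω => ∑' j, v j * Y0 j ω := by
  set η : ℕ → ℝ := fun n => 1 / (n + 1)
  have hη n : η n ∈ Set.Ioc (0:ℝ) 1 :=
    ⟨by positivity, div_le_one_of_le₀ (by simp) (by positivity)⟩
  have hηlim : Tendsto η atTop (𝓝[Set.Ioc (0:ℝ) 1] 0) :=
    tendsto_nhdsWithin_of_tendsto_nhds_of_eventually_within _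
      tendsto_one_div_add_atTop_nhds_zero_nat (Eventually.of_forall hη)
  exact ae_eq_tsum_mul_of_tendsto_of_integral_eq_one hv hsum (fun j n => hnn j _ (hη n)) hnn0
    (fun j n => hmean j _ (hη n)) hmean0 (fun j => (hconv j).mono fun _ h => h.comp hηlim)
    (hS.mono fun _ h => h.comp hηlim)

theorem stmt_3 {Ω : Type*} [MeasureSpace Ω] [IsProbabilityMeasure (ℙ : Measure Ω)]
    {J : Type*} [Countable J]
    (v : J → ℝ) (hv : ∀ j, 0 ≤ v j) (hsum : Summable v)
    (Y : J → ℝ → Ω → ℝ) (Y0 : J → Ω → ℝ)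
    (hnn : ∀ j, ∀ η ∈ Set.Ioc (0:ℝ) 1, ∀ ω, 0 ≤ Y j η ω)
    (hnn0 : ∀ j ω, 0 ≤ Y0 j ω)
    (hmean : ∀ j, ∀ η ∈ Set.Ioc (0:ℝ) 1, ∫ ω, Y j η ω ∂ℙ = 1)
    (hmean0 : ∀ j, ∫ ω, Y0 j ω ∂ℙ = 1)
    (hconv : ∀ j, ∀ᵐ ω ∂ℙ, Tendsto (fun η => Y j η ω) (𝓝[Set.Ioc (0:ℝ) 1] 0) (𝓝 (Y0 j ω)))
    (S0 : Ω → ℝ)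
    (hS : ∀ᵐ ω ∂ℙ, Tendsto (fun η => ∑' j, v j * Y j η ω) (𝓝[Set.Ioc (0:ℝ) 1] 0) (𝓝 (S0 ω))) :
    S0 =ᵐ[ℙ] fun ω => ∑' j, v j * Y0 j ω :=
  stmt_3_general v hv hsum Y Y0 hnn hnn0 hmean hmean0 hconv S0 hS
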